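/- For all x, y in the ellipsoid E = {x ∈ ℍ : 9(re x)² + |im x|² < 1}, the series k_E(x,y) = Σ_{m=0}^∞ P_m(x)·conj(P_m(y)) converges, and k_E is positive definite on E: for every N, all points x₁, …, x_N ∈ E and all u₁, …, u_N ∈ ℍ, the quaternion Σ_{i,j=1}^N conj(u_i)·k_E(x_i, x_j)·u_j is a nonnegative real number (its three imaginary parts vanish and its real part is ≥ 0). -/

import Mathlib

open Quaternion

noncomputable section

/-- The coefficients `T^m_j = 2(m-j+1)/((m+1)(m+2))`. -/
def appellT (m j : ℕ) : ℝ :=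
  (2 * ((m : ℝ) - (j : ℝ) + 1)) / (((m : ℝ) + 1) * ((m : ℝ) + 2))

/-- The `m`-th quaternionic Appell polynomial
`Q_m(x) = Σ_{j=0}^m T^m_j x^{m-j} x̄^j`. -/
def appellQ (m : ℕ) (x : ℍ[ℝ]) : ℍ[ℝ] :=
  ∑ j ∈ Finset.range (m + 1), appellT m j • (x ^ (m - j) * (star x) ^ j)

/-- The normalizing constants `c_m = Σ_{j=0}^m (-1)^j T^m_j`. -/
def appellc (m : ℕ) : ℝ := ∑ j ∈ Finset.range (m + 1), (-1 : ℝ) ^ j * appellT m j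

/-- The polynomials `P_m = Q_m / c_m`. -/
def appellP (m : ℕ) (x : ℍ[ℝ]) : ℍ[ℝ] := (appellc m)⁻¹ • appellQ m x

/-- The ellipsoid `E = {x ∈ ℍ : 9(re x)² + |im x|² < 1}`. -/
def ellE : Set ℍ[ℝ] := {x : ℍ[ℝ] | 9 * x.re ^ 2 + ‖x.im‖ ^ 2 < 1}

open Finset

/-! The weights `T^m_j`, `0 ≤ j ≤ m`, are nonnegative and sum to `1`, so `‖Q_m(x)‖ ≤ ‖x‖^m`;
an alternating sum gives `c_m = (2m + 3 + (-1)^m) / (2(m+1)(m+2)) ≥ 1/(m+2)`, hence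
`‖P_m(x)‖ ≤ (m+2)‖x‖^m`. As `E` lies in the open unit ball, the kernel series is dominated by
`∑ (m+2)² (‖x‖‖y‖)^m`. Summing termwise, the quadratic form becomes `∑_m w_m conj(w_m)` with
`w_m = ∑_i conj(u_i) P_m(x_i)`, a convergent series of the nonnegative reals `|w_m|²`. -/

lemma sum_range_sub_add_one (m : ℕ) :
    ∑ j ∈ range (m + 1), ((m : ℝ) - j + 1) = (m + 1) * (m + 2) / 2 := by
  induction m with
  | zero => norm_num
  | succ m ih =>
    rw [sum_range_succ']
    push_cast
    simp only [add_sub_add_right_eq_sub, ih]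
    ring

lemma sum_range_neg_one_pow_mul_sub_add_one (m : ℕ) :
    ∑ j ∈ range (m + 1), (-1 : ℝ) ^ j * ((m : ℝ) - j + 1) = (2 * m + 3 + (-1) ^ m) / 4 := by
  induction m with
  | zero => norm_num
  | succ m ih =>
    have : ∑ j ∈ range (m + 1), (-1 : ℝ) ^ (j + 1) * ((m + 1 : ℕ) - (j + 1 : ℕ) + 1 : ℝ)
        = -∑ j ∈ range (m + 1), (-1 : ℝ) ^ j * ((m : ℝ) - j + 1) := by
      rw [← sum_neg_distrib]
      refine sum_congr rfl fun j _ => ?_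
      push_cast
      ring
    rw [sum_range_succ', this, ih]
    push_cast
    ring

lemma appellT_eq (m j : ℕ) : appellT m j = ((m : ℝ) - j + 1) * (2 / ((m + 1) * (m + 2))) := by
  rw [appellT]; ring

lemma appellT_nonneg {m j : ℕ} (h : j ≤ m) : 0 ≤ appellT m j := by
  have : (j : ℝ) ≤ m := by exact_mod_cast h
  rw [appellT_eq]; exact mul_nonneg (by linarith) (by positivity)

lemma sum_range_appellT (m : ℕ) : ∑ j ∈ range (m + 1), appellT m j = 1 := by
  simp_rw [appellT_eq, ← sum_mul, sum_range_sub_add_one]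
  field_simp

lemma appellc_eq (m : ℕ) : appellc m = (2 * m + 3 + (-1) ^ m) / (2 * (m + 1) * (m + 2)) := by
  simp_rw [appellc, appellT_eq, ← mul_assoc, ← sum_mul, sum_range_neg_one_pow_mul_sub_add_one]
  field_simp
  ring

lemma neg_one_le_neg_one_pow {R : Type*} [Ring R] [LinearOrder R] [IsStrictOrderedRing R]
    (m : ℕ) : (-1 : R) ≤ (-1) ^ m := by
  rcases neg_one_pow_eq_or R m with h | h
  · rw [h]
    exact neg_le_self zero_le_one
  · rw [h]

lemma appellc_pos (m : ℕ) : 0 < appellc m := by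
  rw [appellc_eq]
  exact div_pos (by linarith [neg_one_le_neg_one_pow (R := ℝ) m]) (by positivity)

lemma inv_appellc_le (m : ℕ) : (appellc m)⁻¹ ≤ m + 2 := by
  have := neg_one_le_neg_one_pow (R := ℝ) m
  rw [appellc_eq, inv_div, div_le_iff₀ (by linarith)]
  nlinarith

lemma Quaternion.norm_sq_eq_re_sq_add_norm_im_sq (x : ℍ[ℝ]) : ‖x‖ ^ 2 = x.re ^ 2 + ‖x.im‖ ^ 2 := by
  simp only [sq, ← normSq_eq_norm_mul_self, normSq_def']
  simp [add_assoc]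

lemma norm_lt_one_of_mem_ellE {x : ℍ[ℝ]} (hx : x ∈ ellE) : ‖x‖ < 1 := by
  have : ‖x‖ ^ 2 < 1 := by
    rw [ellE, Set.mem_ofPred_eq] at hx
    rw [Quaternion.norm_sq_eq_re_sq_add_norm_im_sq]
    nlinarith [sq_nonneg x.re]
  exact (sq_lt_one_iff₀ (norm_nonneg x)).mp this

lemma norm_appellQ_le (m : ℕ) (x : ℍ[ℝ]) : ‖appellQ m x‖ ≤ ‖x‖ ^ m := by
  calc ‖appellQ m x‖
      ≤ ∑ j ∈ range (m + 1), ‖appellT m j • (x ^ (m - j) * star x ^ j)‖ := norm_sum_le _ _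
    _ = ∑ j ∈ range (m + 1), appellT m j * ‖x‖ ^ m := by
        refine sum_congr rfl fun j hj => ?_
        have hjm : j ≤ m := Nat.lt_succ_iff.mp (mem_range.mp hj)
        rw [norm_smul, Real.norm_of_nonneg (appellT_nonneg hjm), norm_mul, norm_pow, norm_pow,
          norm_star, ← pow_add, Nat.sub_add_cancel hjm]
    _ = ‖x‖ ^ m := by rw [← sum_mul, sum_range_appellT, one_mul]

lemma norm_appellP_le (m : ℕ) (x : ℍ[ℝ]) : ‖appellP m x‖ ≤ (m + 2) * ‖x‖ ^ m := by
  rw [appellP, norm_smul, Real.norm_of_nonneg (inv_nonneg.mpr (appellc_pos m).le)]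
  exact mul_le_mul (inv_appellc_le m) (norm_appellQ_le m x) (norm_nonneg _) (by positivity)

lemma summable_add_two_sq_mul_geometric {r : ℝ} (h₀ : 0 ≤ r) (h₁ : r < 1) :
    Summable fun m : ℕ => ((m : ℝ) + 2) ^ 2 * r ^ m := by
  have hr : ‖r‖ < 1 := by rwa [Real.norm_of_nonneg h₀]
  refine ((summable_pow_mul_geometric_of_norm_lt_one 2 hr).add
    (((summable_pow_mul_geometric_of_norm_lt_one 1 hr).mul_left 4).add
      ((summable_geometric_of_norm_lt_one hr).mul_left 4))).congr fun m => ?_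
  ring

lemma summable_appellP_mul_star {x y : ℍ[ℝ]} (hx : ‖x‖ < 1) (hy : ‖y‖ < 1) :
    Summable fun m => appellP m x * star (appellP m y) := by
  refine .of_norm_bounded (summable_add_two_sq_mul_geometric (by positivity)
    (mul_lt_one_of_nonneg_of_lt_one_left (norm_nonneg x) hx hy.le)) fun m => ?_
  calc ‖appellP m x * star (appellP m y)‖ = ‖appellP m x‖ * ‖appellP m y‖ := by
        rw [norm_mul, norm_star]
    _ ≤ ((m + 2) * ‖x‖ ^ m) * ((m + 2) * ‖y‖ ^ m) :=
        mul_le_mul (norm_appellP_le m x) (norm_appellP_le m y) (norm_nonneg _) (by positivity)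
    _ = ((m : ℝ) + 2) ^ 2 * (‖x‖ * ‖y‖) ^ m := by ring

theorem sum_star_mul_tsum_mul_star_mul {R ι κ : Type*} [Ring R] [StarRing R] [TopologicalSpace R]
    [IsTopologicalRing R] [T2Space R] [Fintype ι] (a : κ → ι → R) (u : ι → R)
    (h : ∀ i j, Summable fun m => a m i * star (a m j)) :
    ∑ i, ∑ j, star (u i) * (∑' m, a m i * star (a m j)) * u j =
      ∑' m, (∑ i, star (u i) * a m i) * star (∑ i, star (u i) * a m i) := by
  have hsum : ∀ i j, Summable fun m => star (u i) * a m i * (star (a m j) * u j) := fun i j => by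
    simpa only [mul_assoc] using ((h i j).mul_left (star (u i))).mul_right (u j)
  have hterm : ∀ i j, star (u i) * (∑' m, a m i * star (a m j)) * u j =
      ∑' m, star (u i) * a m i * (star (a m j) * u j) := fun i j => by
    rw [← (h i j).tsum_mul_left, ← ((h i j).mul_left _).tsum_mul_right]
    simp only [mul_assoc]
  simp_rw [hterm, star_sum, sum_mul_sum, star_mul, star_star]
  rw [Summable.tsum_finsetSum fun i _ => summable_sum fun j _ => hsum i j]
  exact sum_congr rfl fun i _ => (Summable.tsum_finsetSum fun j _ => hsum i j).symm

/-- The Hardy kernel `k_E(x,y) = Σ_m P_m(x) conj(P_m(y))` converges on `E × E` and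
is positive definite on `E`: every quadratic form
`Σ_{i,j} conj(u_i) k_E(x_i, x_j) u_j` is a nonnegative real quaternion. -/
theorem hardy_kernel_converges_and_posdef :
    (∀ x ∈ ellE, ∀ y ∈ ellE, Summable fun m => appellP m x * star (appellP m y)) ∧
    (∀ (N : ℕ) (x : Fin N → ℍ[ℝ]), (∀ i, x i ∈ ellE) → ∀ u : Fin N → ℍ[ℝ],
      (∑ i, ∑ j, star (u i) *
          (∑' m, appellP m (x i) * star (appellP m (x j))) * u j).imI = 0 ∧
      (∑ i, ∑ j, star (u i) *
          (∑' m, appellP m (x i) * star (appellP m (x j))) * u j).imJ = 0 ∧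
      (∑ i, ∑ j, star (u i) *
          (∑' m, appellP m (x i) * star (appellP m (x j))) * u j).imK = 0 ∧
      0 ≤ (∑ i, ∑ j, star (u i) *
          (∑' m, appellP m (x i) * star (appellP m (x j))) * u j).re) := by
  have summable : ∀ x ∈ ellE, ∀ y ∈ ellE, Summable fun m => appellP m x * star (appellP m y) :=
    fun x hx y hy =>
      summable_appellP_mul_star (norm_lt_one_of_mem_ellE hx) (norm_lt_one_of_mem_ellE hy)
  refine ⟨summable, fun N x hx u => ?_⟩
  rw [sum_star_mul_tsum_mul_star_mul (fun m i => appellP m (x i)) u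
    fun i j => summable _ (hx i) _ (hx j)]
  simp only [self_mul_star, tsum_coe, imI_coe, imJ_coe, imK_coe, re_coe, true_and]
  exact tsum_nonneg fun m => normSq_nonneg
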